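/- For all n ≥ 2, the number of permutations π ∈ Av_n(123,132,321) with π(n) = 1 equals (n−2)!!, and the number of permutations π ∈ Av_n(123,132,321) with π(n−1) = 1 equals (n−1)!!. -/

import Mathlib

/-- `ConsecOcc p π i`: the word `π(i) π(i+1) … π(i+r-1)` (positions `0`-indexed)
is order-isomorphic to the pattern word `p 0, …, p (r-1)`. -/
def ConsecOcc {n r : ℕ} (p : Fin r → ℕ) (π : Equiv.Perm (Fin n)) (i : ℕ) : Prop :=
  ∃ h : i + r ≤ n, ∀ j k : Fin r,
    (π ⟨i + j.val, by have := j.isLt; omega⟩ < π ⟨i + k.val, by have := k.isLt; omega⟩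
      ↔ p j < p k)

/-- The number of consecutive occurrences of the pattern `p` in `π`. -/
noncomputable def occCount {n r : ℕ} (p : Fin r → ℕ) (π : Equiv.Perm (Fin n)) : ℕ :=
  Nat.card {i : ℕ // ConsecOcc p π i}

/-- `π` has no consecutive occurrence of any pattern in `ps`. -/
def AvoidsAll {n r : ℕ} (ps : List (Fin r → ℕ)) (π : Equiv.Perm (Fin n)) : Prop :=
  ∀ p ∈ ps, ∀ i, ¬ ConsecOcc p π i

-- Total number of consecutive occurrences of `p` over all size-`n` permutations satisfying `P`.
open scoped Classical in
noncomputable def totOcc {n r : ℕ} (p : Fin r → ℕ) (P : Equiv.Perm (Fin n) → Prop) : ℕ :=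
  ∑ π : Equiv.Perm (Fin n), if P π then occCount p π else 0

/-- The number of size-`n` permutations satisfying `P`. -/
noncomputable def classCard (n : ℕ) (P : Equiv.Perm (Fin n) → Prop) : ℕ :=
  Nat.card {π : Equiv.Perm (Fin n) // P π}

def p123 : Fin 3 → ℕ := ![1,2,3]
def p132 : Fin 3 → ℕ := ![1,3,2]
def p213 : Fin 3 → ℕ := ![2,1,3]
def p231 : Fin 3 → ℕ := ![2,3,1]
def p312 : Fin 3 → ℕ := ![3,1,2]
def p321 : Fin 3 → ℕ := ![3,2,1]

/-!
A window of three consecutive entries is an occurrence of 123, 132 or 321 exactly when its first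
entry is its minimum or it decreases. As the first entry of a window of an avoider is never its
minimum, the minimum of an avoider sits in one of its last two positions.

Deleting the last entry and standardizing the rest is a bijection
`Perm (Fin (m + 1)) ≃ Fin (m + 1) × Perm (Fin m)`, under which avoidance only gains a condition on
the last window. When the last entry is the minimum, that condition says that the two entries
before it increase, which puts the minimum of the rest in its penultimate place. When the
penultimate entry is the minimum, the last window is never forbidden, and the last entry can take
any of the `n - 1` values other than the minimum. So the numbers `a n` and `b n` of avoiders of
size `n` with the minimum in the last, resp. penultimate, position satisfy `a (n + 1) = b n` and
`b (n + 1) = n * a n`, with `a 2 = b 2 = 1`.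
-/

section Windows

variable {α β : Type*} [LinearOrder α] [LinearOrder β]

def ForbiddenWindow (x y z : α) : Prop := (x < y ∧ x < z) ∨ (z < y ∧ y < x)

def WindowAvoiding {n : ℕ} (w : Fin n → α) : Prop :=
  ∀ i (h : i + 2 < n), ¬ ForbiddenWindow (w ⟨i, by omega⟩) (w ⟨i + 1, by omega⟩) (w ⟨i + 2, h⟩)

theorem forbiddenWindow_iff_exists_pattern {x y z : α} (hyz : y ≠ z) : ForbiddenWindow x y z ↔
    ∃ p ∈ [p123, p132, p321], ∀ j k : Fin 3, ![x, y, z] j < ![x, y, z] k ↔ p j < p k := by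
  simp only [List.mem_cons, List.not_mem_nil, or_false, exists_eq_or_imp, exists_eq_left,
    Fin.forall_fin_succ]
  simp [p123, p132, p321, ForbiddenWindow]
  grind

theorem StrictMono.forbiddenWindow_iff {f : α → β} (hf : StrictMono f) {x y z : α} :
    ForbiddenWindow (f x) (f y) (f z) ↔ ForbiddenWindow x y z := by
  simp only [ForbiddenWindow, hf.lt_iff_lt]

theorem StrictMono.windowAvoiding_comp_iff {f : α → β} (hf : StrictMono f) {n : ℕ}
    {w : Fin n → α} : WindowAvoiding (f ∘ w) ↔ WindowAvoiding w := by
  simp only [WindowAvoiding, Function.comp_apply, hf.forbiddenWindow_iff]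

theorem windowAvoiding_iff_init {m : ℕ} {w : Fin (m + 3) → α} :
    WindowAvoiding w ↔ WindowAvoiding (Fin.init w) ∧
      ¬ ForbiddenWindow (w (Fin.last m).castSucc.castSucc) (w (Fin.last (m + 1)).castSucc)
        (w (Fin.last (m + 2))) := by
  constructor
  · intro hw
    exact ⟨fun i h => hw i (by omega), hw m (by omega)⟩
  · rintro ⟨hinit, hlast⟩ i h
    rcases Nat.lt_or_ge (i + 2) (m + 2) with hi | hi
    · exact hinit i hi
    · obtain rfl : i = m := by omega
      exact hlast

theorem WindowAvoiding.le_add_two_of_isMin {n : ℕ} {w : Fin n → α} (hw : WindowAvoiding w)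
    (hinj : Function.Injective w) {j : Fin n} (hmin : ∀ k, w j ≤ w k) : n ≤ j + 2 := by
  by_contra! h
  refine hw j h (Or.inl ⟨(hmin _).lt_of_ne (hinj.ne ?_), (hmin _).lt_of_ne (hinj.ne ?_)⟩) <;>
    simp [Fin.ext_iff]

end Windows

theorem consecOcc_iff_of_lt {n : ℕ} {p : Fin 3 → ℕ} {π : Equiv.Perm (Fin n)} {i : ℕ}
    (h : i + 2 < n) : ConsecOcc p π i ↔ ∀ j k : Fin 3,
      ![π ⟨i, by omega⟩, π ⟨i + 1, by omega⟩, π ⟨i + 2, h⟩] j <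
        ![π ⟨i, by omega⟩, π ⟨i + 1, by omega⟩, π ⟨i + 2, h⟩] k ↔ p j < p k := by
  have hw : ∀ j : Fin 3, π ⟨i + j, by omega⟩ =
      ![π ⟨i, by omega⟩, π ⟨i + 1, by omega⟩, π ⟨i + 2, h⟩] j := by
    intro j; fin_cases j <;> rfl
  simp only [ConsecOcc, hw]
  exact ⟨fun ⟨_, H⟩ => H, fun H => ⟨by omega, H⟩⟩

theorem avoidsAll_iff_windowAvoiding {n : ℕ} (π : Equiv.Perm (Fin n)) :
    AvoidsAll [p123, p132, p321] π ↔ WindowAvoiding π := by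
  have hne : ∀ i (h : i + 2 < n), π ⟨i + 1, by omega⟩ ≠ π ⟨i + 2, h⟩ := fun i h =>
    π.injective.ne (by simp)
  constructor
  · intro H i h hF
    obtain ⟨p, hp, hocc⟩ := (forbiddenWindow_iff_exists_pattern (hne i h)).1 hF
    exact H p hp i ((consecOcc_iff_of_lt h).2 hocc)
  · intro H p hp i hocc
    have h : i + 2 < n := by obtain ⟨h, -⟩ := hocc; omega
    exact H i h ((forbiddenWindow_iff_exists_pattern (hne i h)).2
      ⟨p, hp, (consecOcc_iff_of_lt h).1 hocc⟩)

theorem Fin.succAbove_eq_zero_iff_ne_zero_and {n : ℕ} {a : Fin (n + 2)} {b : Fin (n + 1)} :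
    a.succAbove b = 0 ↔ a ≠ 0 ∧ b = 0 := by
  by_cases ha : a = 0
  · simp [ha, Fin.succ_ne_zero]
  · simp [ha, Fin.succAbove_eq_zero_iff ha]

namespace Equiv.Perm

variable {m : ℕ}

/-- Delete the entry at position `p` and standardize the remaining values. -/
def removeNth (p : Fin (m + 1)) (π : Perm (Fin (m + 1))) : Perm (Fin m) :=
  removeNone ((finSuccEquiv' p).symm.trans (π.trans (finSuccEquiv' (π p))))

theorem succAbove_removeNth_apply (p : Fin (m + 1)) (π : Perm (Fin (m + 1))) (i : Fin m) :
    (π p).succAbove (removeNth p π i) = π (p.succAbove i) := by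
  obtain ⟨j, hj⟩ := Fin.exists_succAbove_eq (π.injective.ne (p.succAbove_ne i))
  have h := removeNone_some ((finSuccEquiv' p).symm.trans (π.trans (finSuccEquiv' (π p))))
    (x := i) ⟨j, by simp [← hj]⟩
  simp only [trans_apply, finSuccEquiv'_symm_some, ← hj, finSuccEquiv'_succAbove,
    Option.some_inj] at h
  rw [removeNth, h, hj]

def insertNth (p v : Fin (m + 1)) (σ : Perm (Fin m)) : Perm (Fin (m + 1)) :=
  (finSuccEquiv' p).trans ((optionCongr σ).trans (finSuccEquiv' v).symm)

@[simp]
theorem insertNth_apply_self (p v : Fin (m + 1)) (σ : Perm (Fin m)) : insertNth p v σ p = v := by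
  simp [insertNth]

@[simp]
theorem insertNth_apply_succAbove (p v : Fin (m + 1)) (σ : Perm (Fin m)) (i : Fin m) :
    insertNth p v σ (p.succAbove i) = v.succAbove (σ i) := by
  simp [insertNth]

@[simp]
theorem insertNth_last_apply_castSucc (v : Fin (m + 1)) (σ : Perm (Fin m)) (i : Fin m) :
    insertNth (Fin.last m) v σ i.castSucc = v.succAbove (σ i) := by
  rw [← Fin.succAbove_last_apply, insertNth_apply_succAbove]

def decomposeFinAt (p : Fin (m + 1)) : Perm (Fin (m + 1)) ≃ Fin (m + 1) × Perm (Fin m) where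
  toFun π := (π p, removeNth p π)
  invFun x := insertNth p x.1 x.2
  left_inv π := ext fun j => p.succAboveCases (by simp)
    (fun i => by simp [succAbove_removeNth_apply]) j
  right_inv := fun ⟨v, σ⟩ => Prod.ext (insertNth_apply_self p v σ) <| ext fun i =>
    v.succAbove_right_injective <| by
      simpa using succAbove_removeNth_apply p (insertNth p v σ) i

theorem card_subtype_eq_mul_of_insertNth {R : Perm (Fin (m + 1)) → Prop}
    {P : Fin (m + 1) → Prop} {Q : Perm (Fin m) → Prop} (p : Fin (m + 1))
    (h : ∀ v σ, R (insertNth p v σ) ↔ P v ∧ Q σ) :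
    Nat.card {π // R π} = Nat.card {v // P v} * Nat.card {σ // Q σ} := by
  rw [← Nat.card_prod, ← Nat.card_congr subtypeProdEquivProd]
  exact Nat.card_congr ((decomposeFinAt p).symm.subtypeEquiv fun x => (h x.1 x.2).symm).symm

end Equiv.Perm

open Equiv Perm

/-- Positions and values are `0`-indexed: `zeroAtCount n k` counts the avoiders with `π (k + 1) = 1`
in the paper's notation. -/
noncomputable def zeroAtCount (n : ℕ) (k : Fin n) : ℕ :=
  classCard n (fun π => AvoidsAll [p123, p132, p321] π ∧ π k = ⟨0, k.pos⟩)

section Recursion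

variable {m : ℕ}

theorem windowAvoiding_insertNth_last_iff {v : Fin (m + 3)} {σ : Perm (Fin (m + 2))} :
    WindowAvoiding (insertNth (Fin.last _) v σ) ↔ WindowAvoiding σ ∧
      ¬ ForbiddenWindow (v.succAbove (σ (Fin.last m).castSucc)) (v.succAbove (σ (Fin.last _)))
        v := by
  have hinit : Fin.init (insertNth (Fin.last _) v σ) = v.succAbove ∘ σ := by
    ext i
    simp [Fin.init]
  rw [windowAvoiding_iff_init, hinit, (Fin.strictMono_succAbove v).windowAvoiding_comp_iff]
  simp

theorem WindowAvoiding.lt_last_iff {σ : Perm (Fin (m + 2))} (hσ : WindowAvoiding σ) :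
    σ (Fin.last m).castSucc < σ (Fin.last _) ↔ σ (Fin.last m).castSucc = 0 := by
  constructor
  · intro hlt
    obtain ⟨j, hj⟩ : ∃ j, σ j = 0 := ⟨_, σ.apply_symm_apply 0⟩
    have hpos := hσ.le_add_two_of_isMin σ.injective (j := j) (by simp [hj])
    obtain rfl | rfl : j = (Fin.last m).castSucc ∨ j = Fin.last _ := by
      simp only [Fin.ext_iff, Fin.val_castSucc, Fin.val_last]; omega
    · exact hj
    · exact absurd (hj ▸ hlt) (Fin.not_lt_zero _)
  · intro h0
    rw [h0]
    exact (Fin.zero_le _).lt_of_ne (h0 ▸ σ.injective.ne (by simp [Fin.ext_iff]))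

theorem zeroAtCount_last_succ (m : ℕ) :
    zeroAtCount (m + 3) (Fin.last _) = zeroAtCount (m + 2) (Fin.last m).castSucc := by
  simp only [zeroAtCount, classCard, avoidsAll_iff_windowAvoiding, Fin.zero_eta]
  rw [card_subtype_eq_mul_of_insertNth (P := (· = 0))
    (Q := fun σ => WindowAvoiding σ ∧ σ (Fin.last m).castSucc = 0) (Fin.last _)]
  · simp
  intro v σ
  rw [windowAvoiding_insertNth_last_iff, insertNth_apply_self]
  have hne : σ (Fin.last m).castSucc ≠ σ (Fin.last _) := σ.injective.ne (by simp [Fin.ext_iff])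
  constructor
  · rintro ⟨⟨hσ, hF⟩, rfl⟩
    refine ⟨rfl, hσ, hσ.lt_last_iff.1 ?_⟩
    simp only [ForbiddenWindow, Fin.zero_succAbove, Fin.succ_lt_succ_iff, not_lt_zero, and_false,
      Fin.succ_pos, true_and, false_or, not_lt] at hF
    exact hF.lt_of_ne hne
  · rintro ⟨rfl, hσ, h0⟩
    refine ⟨⟨hσ, ?_⟩, rfl⟩
    simp [ForbiddenWindow, (hσ.lt_last_iff.2 h0).le]

theorem zeroAtCount_penultimate_succ (m : ℕ) :
    zeroAtCount (m + 3) (Fin.last (m + 1)).castSucc =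
      (m + 2) * zeroAtCount (m + 2) (Fin.last _) := by
  simp only [zeroAtCount, classCard, avoidsAll_iff_windowAvoiding, Fin.zero_eta]
  rw [card_subtype_eq_mul_of_insertNth (P := (· ≠ 0))
    (Q := fun σ => WindowAvoiding σ ∧ σ (Fin.last _) = 0) (Fin.last _)]
  · rw [Nat.card_congr (finSuccAboveEquiv 0).symm]
    simp
  intro v σ
  rw [windowAvoiding_insertNth_last_iff, insertNth_last_apply_castSucc,
    Fin.succAbove_eq_zero_iff_ne_zero_and]
  constructor
  · rintro ⟨⟨hσ, -⟩, hv, h0⟩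
    exact ⟨hv, hσ, h0⟩
  · rintro ⟨hv, hσ, h0⟩
    refine ⟨⟨hσ, ?_⟩, hv, h0⟩
    simp [ForbiddenWindow, (Fin.succAbove_eq_zero_iff hv).2 h0]

end Recursion

theorem zeroAtCount_two (k : Fin 2) : zeroAtCount 2 k = 1 := by
  have hav (π : Perm (Fin 2)) : WindowAvoiding π := fun i h => absurd h (by omega)
  simp only [zeroAtCount, classCard, avoidsAll_iff_windowAvoiding, hav, true_and, Fin.zero_eta]
  rw [card_subtype_eq_mul_of_insertNth (P := (· = 0)) (Q := fun _ => True) k] <;> simp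

theorem stmt3 (n : ℕ) (hn : 2 ≤ n) :
    classCard n (fun π => AvoidsAll [p123, p132, p321] π
        ∧ π ⟨n - 1, by omega⟩ = ⟨0, by omega⟩)
      = Nat.doubleFactorial (n - 2)
    ∧ classCard n (fun π => AvoidsAll [p123, p132, p321] π
        ∧ π ⟨n - 2, by omega⟩ = ⟨0, by omega⟩)
      = Nat.doubleFactorial (n - 1) := by
  obtain ⟨m, rfl⟩ : ∃ m, n = m + 2 := ⟨n - 2, by omega⟩
  change zeroAtCount (m + 2) (Fin.last _) = m.doubleFactorial ∧
    zeroAtCount (m + 2) (Fin.last m).castSucc = (m + 1).doubleFactorial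
  clear hn
  induction m with
  | zero => exact ⟨zeroAtCount_two _, zeroAtCount_two _⟩
  | succ m ih =>
    refine ⟨(zeroAtCount_last_succ m).trans ih.2, ?_⟩
    rw [zeroAtCount_penultimate_succ, ih.1, Nat.doubleFactorial_add_two]
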